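/- arXiv:2206.09284 — 3 statements merged into one kernel-verified Lean document; each statement's English description precedes it below -/
import Mathlib

section
/- Let i ≥ 2, let X be an F_{q^m}-subspace of (F_{q^m})^n, and suppose that for every subspace Y spanned by vectors of rank ≤ i, the subspace of X ∩ Y spanned by its vectors of rank ≤ i equals X ∩ Y. If x ∈ X has rank > i, y has rank ≤ i, and x + y has rank ≤ i, then y ∈ X. -/
open Submodule

/-- The rank of a vector `v ∈ L^n`: the `Fq`-dimension of the `Fq`-span of its entries. -/
noncomputable def rkVec (Fq : Type*) {L : Type*} [Field Fq] [Field L] [Algebra Fq L]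
    {n : ℕ} (v : Fin n → L) : ℕ :=
  Module.finrank Fq ↥(Submodule.span Fq (Set.range v))


lemma rkVec_smul (Fq : Type*) {L : Type*} [Field Fq] [Field L] [Algebra Fq L]
    {n : ℕ} (a : L) (ha : a ≠ 0) (v : Fin n → L) : rkVec Fq (a • v) = rkVec Fq v := by
  let e : L ≃ₗ[Fq] L := LinearEquiv.ofLinear (LinearMap.mulLeft Fq a) (LinearMap.mulLeft Fq a⁻¹)
    (by ext t; simp [← mul_assoc, mul_inv_cancel₀ ha])
    (by ext t; simp [← mul_assoc, inv_mul_cancel₀ ha])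
  have h : Submodule.span Fq (Set.range (a • v))
      = (Submodule.span Fq (Set.range v)).map (e : L →ₗ[Fq] L) := by
    rw [Submodule.map_span]
    congr 1
    rw [← Set.range_comp]
    rfl
  unfold rkVec
  rw [h]
  exact LinearEquiv.finrank_map_eq e _

lemma rkVec_zero (Fq : Type*) {L : Type*} [Field Fq] [Field L] [Algebra Fq L]
    {n : ℕ} : rkVec Fq (0 : Fin n → L) = 0 := by
  have : Submodule.span Fq (Set.range (0 : Fin n → L)) = ⊥ := by
    rw [Submodule.span_eq_bot]
    rintro t ⟨j, rfl⟩; rfl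
  unfold rkVec
  rw [this]
  exact finrank_bot Fq L


/-- The rank-metric lattice `L_i(n,m;q)`: subspaces of `L^n` spanned by their vectors of
rank at most `i`. -/
def RML (Fq L : Type*) [Field Fq] [Field L] [Algebra Fq L] (n i : ℕ) :
    Set (Submodule L (Fin n → L)) :=
  {X | X = Submodule.span L {x | x ∈ X ∧ rkVec Fq x ≤ i}}

/-- The meet in the rank-metric lattice: span of the rank-`≤ i` vectors of the intersection. -/
def rmlMeet (Fq : Type*) {L : Type*} [Field Fq] [Field L] [Algebra Fq L] {n : ℕ} (i : ℕ)
    (X Y : Submodule L (Fin n → L)) : Submodule L (Fin n → L) :=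
  Submodule.span L {x | x ∈ X ⊓ Y ∧ rkVec Fq x ≤ i}

/-- `X` is a modular element of the rank-metric lattice `L_i`. -/
def IsModularElt (Fq : Type*) {L : Type*} [Field Fq] [Field L] [Algebra Fq L] {n : ℕ} (i : ℕ)
    (X : Submodule L (Fin n → L)) : Prop :=
  ∀ Y ∈ RML Fq L n i,
    Module.finrank L ↥(rmlMeet Fq i X Y) + Module.finrank L ↥(X ⊔ Y)
      = Module.finrank L ↥X + Module.finrank L ↥Y

theorem mem_of_modular_meet_criterion (q m n : ℕ) (hq : IsPrimePow q) (hn : 2 ≤ n)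
    (hm : 2 ≤ m) (Fq L : Type) [Field Fq] [Field L] [Algebra Fq L] [Fintype Fq]
    (hcard : Fintype.card Fq = q) (hdim : Module.finrank Fq L = m)
    (i : ℕ) (hi : 2 ≤ i) (hin : i ≤ n)
    (X : Submodule L (Fin n → L))
    (hX : ∀ Y ∈ RML Fq L n i, rmlMeet Fq i X Y = X ⊓ Y)
    (x y : Fin n → L) (hx : x ∈ X) (hxr : i < rkVec Fq x)
    (hyr : rkVec Fq y ≤ i) (hxyr : rkVec Fq (x + y) ≤ i) :
    y ∈ X := by
  by_cases hy : y ∈ X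
  · exact hy
  exfalso
  set Y : Submodule L (Fin n → L) := Submodule.span L {y, x + y} with hYdef
  have hyY : y ∈ Y := subset_span (Set.mem_insert _ _)
  have hxyY : x + y ∈ Y := subset_span (Set.mem_insert_of_mem _ rfl)
  have hYmem : Y ∈ RML Fq L n i := by
    refine le_antisymm ?_ (span_le.mpr fun v hv => hv.1)
    rw [hYdef]
    refine span_le.mpr ?_
    rintro v (rfl | rfl)
    · exact subset_span ⟨hyY, hyr⟩
    · exact subset_span ⟨hxyY, hxyr⟩
  have hxY : x ∈ Y := by
    have := Y.sub_mem hxyY hyY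
    simpa using this
  have hxM : x ∈ rmlMeet Fq i X Y := by
    rw [hX Y hYmem]
    exact Submodule.mem_inf.mpr ⟨hx, hxY⟩
  have hT : ∀ z ∈ {v | v ∈ X ⊓ Y ∧ rkVec Fq v ≤ i}, z = (0 : Fin n → L) := by
    rintro z ⟨hzXY, hzr⟩
    have hzX : z ∈ X := (Submodule.mem_inf.mp hzXY).1
    have hzY : z ∈ Y := (Submodule.mem_inf.mp hzXY).2
    obtain ⟨a, b, hab⟩ := Submodule.mem_span_pair.mp hzY
    have hz' : z = b • x + (a + b) • y := by
      rw [← hab, smul_add, add_smul]; abel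
    by_cases hb : a + b = 0
    · have hzbx : z = b • x := by rw [hz', hb, zero_smul, add_zero]
      by_cases hb0 : b = 0
      · rw [hzbx, hb0, zero_smul]
      · exfalso
        rw [hzbx, rkVec_smul Fq b hb0 x] at hzr
        exact absurd hzr (not_le.mpr hxr)
    · exfalso
      apply hy
      have hyeq : y = (a + b)⁻¹ • (z - b • x) := by
        rw [hz']
        simp [smul_smul, inv_mul_cancel₀ hb]
      rw [hyeq]
      exact X.smul_mem _ (X.sub_mem hzX (X.smul_mem _ hx))
  have hx0 : x = 0 := by
    have : rmlMeet Fq i X Y ≤ ⊥ := by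
      unfold rmlMeet
      rw [Submodule.span_le]
      intro v hv
      simp [hT v hv]
    simpa using this hxM
  rw [hx0, rkVec_zero] at hxr
  omega
end

section
/- For all 1 ≤ i ≤ n, the integers 1, q^m, q^{2m}, ..., q^{(i−1)m} are roots of the characteristic polynomial of the rank-metric lattice L_i(n,m;q). -/
open Submodule

open Module

/-! Put `λ = q^{mj} = |L|^j`. Then `λ^{n - dim X}` is the number of `L`-linear maps
`φ : L^n → L^j` vanishing on `X`, so `χ(λ) = ∑_φ ∑_{X ∈ L_i, X ≤ ker φ} μ(X)`. The elements of `L_i`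
below `ker φ` are exactly those below the span of the rank-`≤ i` vectors of `ker φ`, and this span is
nonzero: as `j < n`, `ker φ` contains a nonzero vector supported on `j + 1 ≤ i` coordinates, which
has rank at most `i`. Hence every inner sum vanishes by the recursion defining `μ`. -/

section Counting

variable {K V W : Type*} [Field K] [AddCommGroup V] [Module K V] [AddCommGroup W] [Module K W]

def Submodule.liftQEquiv (X : Submodule K V) :
    {φ : V →ₗ[K] W // X ≤ LinearMap.ker φ} ≃ ((V ⧸ X) →ₗ[K] W) where
  toFun φ := X.liftQ φ.1 φ.2
  invFun ψ := ⟨ψ ∘ₗ X.mkQ, fun x hx => by simp [(Submodule.Quotient.mk_eq_zero X).2 hx]⟩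
  left_inv φ := Subtype.ext (X.liftQ_mkQ φ.1 φ.2)
  right_inv ψ := Submodule.linearMap_qext _ (X.liftQ_mkQ _ _)

variable [FiniteDimensional K V] [FiniteDimensional K W]

theorem natCard_linearMap_le_ker (X : Submodule K V) :
    Nat.card {φ : V →ₗ[K] W // X ≤ LinearMap.ker φ}
      = (Nat.card K ^ finrank K W) ^ (finrank K V - finrank K X) := by
  rw [Nat.card_congr X.liftQEquiv, Module.natCard_eq_pow_finrank (K := K),
    Module.finrank_linearMap, X.finrank_quotient, ← pow_mul, mul_comm]

theorem finsum_mul_card_pow_codim_eq_finsum_linearMap [Finite K] {R : Type*} [CommSemiring R]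
    (S : Set (Submodule K V)) (f : Submodule K V → R) :
    ∑ᶠ X ∈ S, f X * ((Nat.card K : R) ^ finrank K W) ^ (finrank K V - finrank K X)
      = ∑ᶠ φ : V →ₗ[K] W, ∑ᶠ X ∈ {X | X ∈ S ∧ X ≤ LinearMap.ker φ}, f X := by
  classical
  have : Finite V := Module.finite_of_finite K
  have : Finite (Submodule K V) := Finite.of_injective _ SetLike.coe_injective
  have : Finite (V →ₗ[K] W) := Module.finite_of_finite K
  have : Fintype (V →ₗ[K] W) := Fintype.ofFinite _
  have hterm : ∀ X : Submodule K V,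
      f X * ((Nat.card K : R) ^ finrank K W) ^ (finrank K V - finrank K X)
        = ∑ φ : V →ₗ[K] W, if X ≤ LinearMap.ker φ then f X else 0 := by
    intro X
    rw [← Finset.sum_filter, Finset.sum_const, nsmul_eq_mul, mul_comm, ← Fintype.card_subtype,
      ← Nat.card_eq_fintype_card, natCard_linearMap_le_ker]
    push_cast
    rfl
  simp_rw [hterm]
  rw [finsum_mem_eq_finite_toFinset_sum _ S.toFinite, Finset.sum_comm, finsum_eq_sum_of_fintype]
  refine Finset.sum_congr rfl fun φ _ => ?_
  rw [finsum_mem_eq_finite_toFinset_sum _ (Set.toFinite _), ← Finset.sum_filter]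
  congr 1
  ext X
  simp

end Counting

section RankMetric

variable {Fq L : Type*} [Field Fq] [Field L] [Algebra Fq L]

theorem rkVec_le_card {n : ℕ} (v : Fin n → L) : rkVec Fq v ≤ n :=
  (finrank_range_le_card v).trans_eq (Fintype.card_fin n)

theorem rkVec_extend_zero_le {k n : ℕ} (s : Fin k → Fin n) (u : Fin k → L) :
    rkVec Fq (Function.extend s u 0) ≤ rkVec Fq u := by
  have : FiniteDimensional Fq (span Fq (Set.range u)) :=
    FiniteDimensional.span_of_finite Fq (Set.finite_range u)
  refine Submodule.finrank_mono (span_le.2 fun x hx => ?_)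
  rcases Set.range_extend_subset s u 0 hx with hx | ⟨_, _, rfl⟩
  · exact subset_span hx
  · exact zero_mem _

theorem exists_ne_zero_mem_ker_rkVec_le {n j : ℕ} (hjn : j < n)
    (φ : (Fin n → L) →ₗ[L] (Fin j → L)) :
    ∃ v ∈ LinearMap.ker φ, v ≠ 0 ∧ rkVec Fq v ≤ j + 1 := by
  -- `φ` cannot be injective on the vectors supported on the first `j + 1` coordinates.
  set ι := Function.ExtendByZero.linearMap L (Fin.castLE hjn)
  have hker : LinearMap.ker (φ ∘ₗ ι) ≠ ⊥ :=
    LinearMap.ker_ne_bot_of_finrank_lt (by simp)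
  obtain ⟨u, hu, hu0⟩ := (Submodule.ne_bot_iff _).1 hker
  refine ⟨ι u, hu, ?_, (rkVec_extend_zero_le _ u).trans (rkVec_le_card u)⟩
  rw [← ι.map_zero]
  exact fun h => hu0 (Function.extend_injective (Fin.castLE_injective hjn) 0 h)

variable (Fq) {n : ℕ}

def rankClosure (i : ℕ) (X : Submodule L (Fin n → L)) : Submodule L (Fin n → L) :=
  span L {x | x ∈ X ∧ rkVec Fq x ≤ i}

variable {Fq} {i : ℕ} {X Y : Submodule L (Fin n → L)}

theorem rankClosure_le : rankClosure Fq i X ≤ X :=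
  span_le.2 fun _ hx => hx.1

theorem rankClosure_mono (h : X ≤ Y) : rankClosure Fq i X ≤ rankClosure Fq i Y :=
  span_mono fun _ hx => ⟨h hx.1, hx.2⟩

theorem rankClosure_mem_RML : rankClosure Fq i X ∈ RML Fq L n i :=
  le_antisymm (span_mono fun _ hx => ⟨subset_span hx, hx.2⟩) rankClosure_le

theorem le_rankClosure_iff (hY : Y ∈ RML Fq L n i) : Y ≤ rankClosure Fq i X ↔ Y ≤ X :=
  ⟨fun h => h.trans rankClosure_le, fun h => hY.trans_le (rankClosure_mono h)⟩

theorem rankClosure_ne_bot {v : Fin n → L} (hv : v ∈ X) (hv0 : v ≠ 0) (hvi : rkVec Fq v ≤ i) :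
    rankClosure Fq i X ≠ ⊥ :=
  (Submodule.ne_bot_iff _).2 ⟨v, subset_span ⟨hv, hvi⟩, hv0⟩

theorem finsum_RML_le_eq_zero {R : Type*} [AddCommMonoid R] [One R]
    {μ : Submodule L (Fin n → L) → R}
    (hμ : ∀ t ∈ RML Fq L n i,
      (∑ᶠ s ∈ {s | s ∈ RML Fq L n i ∧ s ≤ t}, μ s) = if t = ⊥ then 1 else 0)
    {v : Fin n → L} (hv : v ∈ X) (hv0 : v ≠ 0) (hvi : rkVec Fq v ≤ i) :
    ∑ᶠ s ∈ {s | s ∈ RML Fq L n i ∧ s ≤ X}, μ s = 0 := by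
  have hX : {s | s ∈ RML Fq L n i ∧ s ≤ X} = {s | s ∈ RML Fq L n i ∧ s ≤ rankClosure Fq i X} :=
    Set.ext fun s => and_congr_right fun hs => (le_rankClosure_iff hs).symm
  rw [hX, hμ _ rankClosure_mem_RML, if_neg (rankClosure_ne_bot hv hv0 hvi)]

end RankMetric

open scoped Classical in
theorem charPoly_rml_roots_general (q m n : ℕ) (hm : 2 ≤ m)
    (Fq L : Type) [Field Fq] [Field L] [Algebra Fq L] [Fintype Fq]
    (hcard : Fintype.card Fq = q) (hdim : Module.finrank Fq L = m)
    (i : ℕ) (hin : i ≤ n)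
    (μ : Submodule L (Fin n → L) → ℚ)
    (hμ : ∀ t ∈ RML Fq L n i,
      (∑ᶠ s ∈ {s | s ∈ RML Fq L n i ∧ s ≤ t}, μ s) = if t = ⊥ then 1 else 0) :
    ∀ j < i,
      (∑ᶠ X ∈ RML Fq L n i,
        μ X * ((q : ℚ) ^ (m * j)) ^ (n - Module.finrank L ↥X)) = 0 := by
  intro j hj
  have : FiniteDimensional Fq L := FiniteDimensional.of_finrank_pos (by omega)
  have hbase : (q : ℚ) ^ (m * j) = (Nat.card L : ℚ) ^ j := by
    rw [Module.natCard_eq_pow_finrank (K := Fq), Nat.card_eq_fintype_card, hcard, hdim]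
    push_cast
    ring
  have : Finite L := Module.finite_of_finite Fq
  have hcount := finsum_mul_card_pow_codim_eq_finsum_linearMap (W := Fin j → L) (RML Fq L n i) μ
  simp only [finrank_fin_fun] at hcount
  rw [hbase, hcount]
  refine finsum_eq_zero_of_forall_eq_zero fun φ => ?_
  obtain ⟨v, hv, hv0, hvj⟩ := exists_ne_zero_mem_ker_rkVec_le (Fq := Fq) (by omega) φ
  exact finsum_RML_le_eq_zero hμ hv hv0 (by omega)

open scoped Classical in
theorem charPoly_rml_roots (q m n : ℕ) (hq : IsPrimePow q) (hn : 2 ≤ n) (hm : 2 ≤ m)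
    (Fq L : Type) [Field Fq] [Field L] [Algebra Fq L] [Fintype Fq]
    (hcard : Fintype.card Fq = q) (hdim : Module.finrank Fq L = m)
    (i : ℕ) (hi : 1 ≤ i) (hin : i ≤ n)
    (μ : Submodule L (Fin n → L) → ℚ)
    (hμ : ∀ t ∈ RML Fq L n i,
      (∑ᶠ s ∈ {s | s ∈ RML Fq L n i ∧ s ≤ t}, μ s) = if t = ⊥ then 1 else 0) :
    ∀ j < i,
      (∑ᶠ X ∈ RML Fq L n i,
        μ X * ((q : ℚ) ^ (m * j)) ^ (n - Module.finrank L ↥X)) = 0 :=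
  charPoly_rml_roots_general q m n hm Fq L hcard hdim i hin μ hμ
end

section
/- For a k-dimensional F_{q^m}-linear code C in (F_{q^m})^n with minimum rank distance d, and for any 1 ≤ i ≤ n, the first lattice-rank weight satisfies ℓ_1^{(i)}(C) = ⌈d/i⌉. -/
open Submodule

/-- The `(i,j)`-th lattice-rank weight of a code `C ≤ L^n`. -/
noncomputable def latticeRankWeight (Fq L : Type*) [Field Fq] [Field L] [Algebra Fq L]
    (n i j : ℕ) (C : Submodule L (Fin n → L)) : ℕ :=
  sInf {u | ∃ X ∈ RML Fq L n i, Module.finrank L ↥X = u ∧ j ≤ Module.finrank L ↥(C ⊓ X)}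

/-!
A member `X` of `L_i` is spanned by vectors of rank at most `i`, so every vector of `X` is an
`F_{q^m}`-combination of at most `dim X` of them; rank being subadditive and not increased by
scaling, a nonzero codeword in `X` forces `d ≤ i · dim X`. Conversely, splitting a basis of
the `F_q`-span of the entries of a codeword `v` of rank `d` into `⌈d/i⌉` blocks of at most `i`
elements writes `v` as a sum of `⌈d/i⌉` vectors of rank at most `i`; their span lies in `L_i`,
contains `v` and has dimension at most `⌈d/i⌉`.
-/

open Module

theorem Submodule.exists_le_sup_of_finrank_le_add {K V : Type*} [DivisionRing K] [AddCommGroup V]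
    [Module K V] (W : Submodule K V) [FiniteDimensional K W] {a b : ℕ}
    (h : finrank K W ≤ a + b) :
    ∃ U₁ U₂ : Submodule K V, finrank K U₁ ≤ a ∧ finrank K U₂ ≤ b ∧ W ≤ U₁ ⊔ U₂ := by
  classical
  have : FiniteDimensional K (span K (W : Set V)) := by rwa [span_eq]
  obtain ⟨s, -, hs, hspan, -⟩ := exists_finset_span_eq_linearIndepOn K (W : Set V)
  rw [span_eq] at hs hspan
  obtain ⟨t, hts, ht⟩ := Finset.exists_subset_card_eq (min_le_right a s.card)
  refine ⟨span K t, span K ↑(s \ t), ?_, ?_, ?_⟩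
  · exact (finrank_span_finset_le_card t).trans (ht ▸ min_le_left _ _)
  · refine (finrank_span_finset_le_card _).trans ?_
    rw [Finset.card_sdiff_of_subset hts]
    omega
  · rw [← span_union, ← Finset.coe_union, Finset.union_sdiff_of_subset hts, hspan]

section rkVec

variable (Fq : Type*) {L : Type*} [Field Fq] [Field L] [Algebra Fq L] {n : ℕ}

lemma span_mem_RML {i : ℕ} {S : Set (Fin n → L)} (hS : ∀ x ∈ S, rkVec Fq x ≤ i) :
    span L S ∈ RML Fq L n i :=
  le_antisymm (span_mono fun x hx => ⟨subset_span hx, hS x hx⟩) (span_le.2 fun _ hx => hx.1)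

variable [FiniteDimensional Fq L]

lemma rkVec_eq_zero_iff {x : Fin n → L} : rkVec Fq x = 0 ↔ x = 0 := by
  simp [rkVec, Submodule.finrank_eq_zero, span_eq_bot, funext_iff]

lemma rkVec_le_finrank_of_forall_mem {U : Submodule Fq L} {x : Fin n → L} (hx : ∀ j, x j ∈ U) :
    rkVec Fq x ≤ finrank Fq U :=
  Submodule.finrank_mono (span_le.2 (Set.range_subset_iff.2 hx))

lemma rkVec_smul_le (c : L) (x : Fin n → L) : rkVec Fq (c • x) ≤ rkVec Fq x :=
  (rkVec_le_finrank_of_forall_mem Fq (U := (span Fq (Set.range x)).map (LinearMap.mulLeft Fq c))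
    fun j => ⟨x j, subset_span (Set.mem_range_self j), rfl⟩).trans (finrank_map_le _ _)

lemma rkVec_add_le (x y : Fin n → L) : rkVec Fq (x + y) ≤ rkVec Fq x + rkVec Fq y :=
  (rkVec_le_finrank_of_forall_mem Fq fun j => add_mem_sup (subset_span (Set.mem_range_self j))
    (subset_span (Set.mem_range_self j))).trans (finrank_add_le_finrank_add_finrank _ _)

lemma rkVec_sum_le {ι : Type*} (s : Finset ι) (f : ι → Fin n → L) :
    rkVec Fq (∑ t ∈ s, f t) ≤ ∑ t ∈ s, rkVec Fq (f t) :=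
  Finset.le_sum_of_subadditive (M := Fin n → L) (N := ℕ) (rkVec Fq)
    ((rkVec_eq_zero_iff Fq).2 rfl).le (rkVec_add_le Fq) s f

lemma rkVec_le_mul_finrank_of_mem_span {i : ℕ} {S : Set (Fin n → L)}
    (hS : ∀ x ∈ S, rkVec Fq x ≤ i) {v : Fin n → L} (hv : v ∈ span L S) :
    rkVec Fq v ≤ i * finrank L (span L S) := by
  obtain ⟨c, hcard, hcS, rfl⟩ := mem_span_set_iff_exists_finsupp_le_finrank.1 hv
  calc rkVec Fq (c.sum fun x r => r • x) ≤ ∑ x ∈ c.support, rkVec Fq (c x • x) :=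
        rkVec_sum_le Fq _ _
    _ ≤ ∑ _x ∈ c.support, i :=
        Finset.sum_le_sum fun x hx => (rkVec_smul_le Fq _ _).trans (hS x (hcS hx))
    _ ≤ i * finrank L (span L S) := by
        rw [Finset.sum_const, smul_eq_mul, mul_comm]
        exact Nat.mul_le_mul_left i hcard

lemma rkVec_le_mul_finrank_of_mem_RML {i : ℕ} {X : Submodule L (Fin n → L)}
    (hX : X ∈ RML Fq L n i) {v : Fin n → L} (hv : v ∈ X) : rkVec Fq v ≤ i * finrank L X := by
  have := rkVec_le_mul_finrank_of_mem_span Fq (S := {x | x ∈ X ∧ rkVec Fq x ≤ i})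
    (fun _ hx => hx.2) (by rwa [← hX])
  rwa [← hX] at this

lemma exists_add_eq_of_rkVec_le_add {v : Fin n → L} {a b : ℕ} (h : rkVec Fq v ≤ a + b) :
    ∃ x y : Fin n → L, rkVec Fq x ≤ a ∧ rkVec Fq y ≤ b ∧ x + y = v := by
  obtain ⟨U₁, U₂, h₁, h₂, hle⟩ := (span Fq (Set.range v)).exists_le_sup_of_finrank_le_add h
  choose x hx y hy hxy using fun j => mem_sup.1 (hle (subset_span (Set.mem_range_self j)))
  exact ⟨x, y, (rkVec_le_finrank_of_forall_mem Fq hx).trans h₁,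
    (rkVec_le_finrank_of_forall_mem Fq hy).trans h₂, funext hxy⟩

lemma exists_sum_eq_of_rkVec_le_mul {i c : ℕ} {v : Fin n → L} (h : rkVec Fq v ≤ i * c) :
    ∃ u : Fin c → Fin n → L, (∀ s, rkVec Fq (u s) ≤ i) ∧ ∑ s, u s = v := by
  induction c generalizing v with
  | zero =>
    exact ⟨0, fun s => s.elim0, by simpa [eq_comm] using (rkVec_eq_zero_iff Fq).1 (by omega)⟩
  | succ c ih =>
    obtain ⟨x, y, hx, hy, rfl⟩ := exists_add_eq_of_rkVec_le_add Fq (h.trans_eq (Nat.mul_succ i c))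
    obtain ⟨u, hu, rfl⟩ := ih hx
    exact ⟨Fin.snoc u y, Fin.lastCases (by simpa using hy) (by simpa using hu),
      by simp [Fin.sum_univ_castSucc]⟩

lemma exists_mem_RML_finrank_le_of_rkVec_le_mul {i c : ℕ} {v : Fin n → L}
    (h : rkVec Fq v ≤ i * c) : ∃ X ∈ RML Fq L n i, v ∈ X ∧ finrank L X ≤ c := by
  obtain ⟨u, hu, rfl⟩ := exists_sum_eq_of_rkVec_le_mul Fq h
  exact ⟨span L (Set.range u), span_mem_RML Fq (Set.forall_mem_range.2 hu),
    sum_mem fun s _ => subset_span (Set.mem_range_self s),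
    (finrank_range_le_card u).trans_eq (Fintype.card_fin c)⟩

end rkVec

lemma latticeRankWeight_eq_of_exists_of_forall (Fq : Type*) {L : Type*} [Field Fq] [Field L]
    [Algebra Fq L] {n i j c : ℕ} {C : Submodule L (Fin n → L)}
    (hex : ∃ X ∈ RML Fq L n i, finrank L X ≤ c ∧ j ≤ finrank L ↥(C ⊓ X))
    (hle : ∀ X ∈ RML Fq L n i, j ≤ finrank L ↥(C ⊓ X) → c ≤ finrank L X) :
    latticeRankWeight Fq L n i j C = c := by
  obtain ⟨X, hX, hXc, hCX⟩ := hex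
  unfold latticeRankWeight
  refine le_antisymm (le_trans (Nat.sInf_le ⟨X, hX, rfl, hCX⟩) hXc) ?_
  refine le_csInf ⟨_, X, hX, rfl, hCX⟩ ?_
  rintro _ ⟨Y, hY, rfl, hCY⟩
  exact hle Y hY hCY

theorem latticeRankWeight_one_eq_ceil_div_general (m n d : ℕ)
    (hm : 2 ≤ m)
    (Fq L : Type) [Field Fq] [Field L] [Algebra Fq L]
    (hdim : Module.finrank Fq L = m)
    (C : Submodule L (Fin n → L))
    (i : ℕ) (hi : 1 ≤ i)
    (hd : IsLeast {r | ∃ v ∈ C, v ≠ 0 ∧ rkVec Fq v = r} d) :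
    latticeRankWeight Fq L n i 1 C = (d + i - 1) / i := by
  have : FiniteDimensional Fq L := FiniteDimensional.of_finrank_pos (by omega)
  obtain ⟨⟨v, hvC, hv0, rfl⟩, hmin⟩ := hd
  rw [← Nat.ceilDiv_eq_add_pred_div]
  refine latticeRankWeight_eq_of_exists_of_forall Fq ?_ fun Y hY hCY => ?_
  · obtain ⟨X, hX, hvX, hXc⟩ := exists_mem_RML_finrank_le_of_rkVec_le_mul Fq (v := v)
      ((le_smul_ceilDiv hi).trans_eq (smul_eq_mul _ _))
    exact ⟨X, hX, hXc, one_le_finrank_iff.2 ((C ⊓ X).ne_bot_iff.2 ⟨v, ⟨hvC, hvX⟩, hv0⟩)⟩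
  · obtain ⟨w, ⟨hwC, hwY⟩, hw0⟩ := (C ⊓ Y).ne_bot_iff.1 (one_le_finrank_iff.1 hCY)
    exact (ceilDiv_le_iff_le_mul hi).2
      ((hmin ⟨w, hwC, hw0, rfl⟩).trans (rkVec_le_mul_finrank_of_mem_RML Fq hY hwY))

theorem latticeRankWeight_one_eq_ceil_div (q m n k d : ℕ) (hq : IsPrimePow q)
    (hn : 2 ≤ n) (hm : 2 ≤ m)
    (Fq L : Type) [Field Fq] [Field L] [Algebra Fq L] [Fintype Fq]
    (hcard : Fintype.card Fq = q) (hdim : Module.finrank Fq L = m)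
    (C : Submodule L (Fin n → L)) (hk : Module.finrank L ↥C = k) (hk1 : 1 ≤ k)
    (i : ℕ) (hi : 1 ≤ i) (hin : i ≤ n)
    (hd : IsLeast {r | ∃ v ∈ C, v ≠ 0 ∧ rkVec Fq v = r} d) :
    latticeRankWeight Fq L n i 1 C = (d + i - 1) / i :=
  latticeRankWeight_one_eq_ceil_div_general m n d hm Fq L hdim C i hi hd
end
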